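/- Let B ≥ 1 be a natural number, let ε ≥ 0 be a real number, and set p = 1/(1 + e^{ε/2}). For i : Fin B and v : Fin B → Bool, let d(i,v) be the number of coordinates j such that v j differs from the indicator of (j = i), and define P_p(i,v) = p^{d(i,v)}·(1−p)^{B−d(i,v)}. Then for all i, i' : Fin B and all v : Fin B → Bool, P_p(i,v) ≤ e^ε · P_p(i',v). In other words, randomized response on one-hot vectors with flipping probability 1/(e^{ε/2}+1) satisfies ε-local differential privacy. -/

import Mathlib

/-- Hamming distance of an output vector `v` to the one-hot vector of bucket
index `i`. -/
def hamDist {B : ℕ} (i : Fin B) (v : Fin B → Bool) : ℕ :=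
  (Finset.univ.filter (fun j : Fin B => v j ≠ (if j = i then true else false))).card

/-- Output probability of randomized response with flipping probability `p`
applied to the one-hot vector of bucket index `i`. -/
noncomputable def rrProb {B : ℕ} (p : ℝ) (i : Fin B) (v : Fin B → Bool) : ℝ :=
  p ^ hamDist i v * (1 - p) ^ (B - hamDist i v)

/-!
With `1 - p = c * p`, where `c = e^{ε/2}`, the output probability is `c^(B - d) * p^B`, where `d`
is the Hamming distance of the output to the input's one-hot vector. Two one-hot vectors are at
Hamming distance at most `2`, so by the triangle inequality the exponents `B - d` for two inputs
differ by at most `2`, and the ratio of output probabilities is at most `c^2 = e^ε`.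
-/

def oneHot {ι : Type*} [DecidableEq ι] (i : ι) : ι → Bool :=
  fun j => if j = i then true else false

theorem hammingDist_oneHot_le_two {ι : Type*} [Fintype ι] [DecidableEq ι] (i i' : ι) :
    hammingDist (oneHot i) (oneHot i') ≤ 2 := by
  have hsub : ({j | oneHot i j ≠ oneHot i' j} : Finset ι) ⊆ {i, i'} := by
    intro j hj
    by_contra hji
    simp_all [oneHot]
  exact (Finset.card_le_card hsub).trans Finset.card_le_two

theorem hamDist_eq_hammingDist {B : ℕ} (i : Fin B) (v : Fin B → Bool) :
    hamDist i v = hammingDist v (oneHot i) :=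
  rfl

theorem hamDist_le {B : ℕ} (i : Fin B) (v : Fin B → Bool) : hamDist i v ≤ B := by
  simpa [hamDist_eq_hammingDist] using hammingDist_le_card_fintype (x := v) (y := oneHot i)

theorem hamDist_le_hamDist_add_two {B : ℕ} (i i' : Fin B) (v : Fin B → Bool) :
    hamDist i' v ≤ hamDist i v + 2 := by
  simp only [hamDist_eq_hammingDist]
  exact (hammingDist_triangle _ _ _).trans (by gcongr; exact hammingDist_oneHot_le_two i i')

theorem rrProb_eq_pow_mul_pow {B : ℕ} {p c : ℝ} (h : 1 - p = c * p) (i : Fin B)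
    (v : Fin B → Bool) : rrProb p i v = c ^ (B - hamDist i v) * p ^ B := by
  rw [rrProb, h, mul_pow, mul_left_comm, ← pow_add, Nat.add_sub_cancel' (hamDist_le i v)]

theorem rrProb_le_sq_mul_rrProb {B : ℕ} {p c : ℝ} (hp : 0 ≤ p) (hc : 1 ≤ c)
    (h : 1 - p = c * p) (i i' : Fin B) (v : Fin B → Bool) :
    rrProb p i v ≤ c ^ 2 * rrProb p i' v := by
  rw [rrProb_eq_pow_mul_pow h, rrProb_eq_pow_mul_pow h, ← mul_assoc, ← pow_add]
  have hexp : B - hamDist i v ≤ 2 + (B - hamDist i' v) := by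
    have := hamDist_le_hamDist_add_two i i' v
    omega
  gcongr

theorem stmt10_general (B : ℕ) (ε : ℝ) (hε : 0 ≤ ε) (p : ℝ)
    (hp : p = 1 / (1 + Real.exp (ε / 2))) (i i' : Fin B) (v : Fin B → Bool) :
    rrProb p i v ≤ Real.exp ε * rrProb p i' v := by
  have hflip : 1 - p = Real.exp (ε / 2) * p := by
    rw [hp]
    field_simp
    ring
  have hc : 1 ≤ Real.exp (ε / 2) := Real.one_le_exp (by linarith)
  have hsq : Real.exp (ε / 2) ^ 2 = Real.exp ε := by
    rw [← Real.exp_nat_mul]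
    ring_nf
  rw [← hsq]
  exact rrProb_le_sq_mul_rrProb (by rw [hp]; positivity) hc hflip i i' v

/-- Randomized response on one-hot bucket vectors with flipping probability
`p = 1/(1 + e^{ε/2})` satisfies ε-local differential privacy:
`P_p(i,v) ≤ e^ε · P_p(i',v)` for all `i, i', v`. -/
theorem stmt10 (B : ℕ) (hB : 1 ≤ B) (ε : ℝ) (hε : 0 ≤ ε) (p : ℝ)
    (hp : p = 1 / (1 + Real.exp (ε / 2))) (i i' : Fin B) (v : Fin B → Bool) :
    rrProb p i v ≤ Real.exp ε * rrProb p i' v :=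
  stmt10_general B ε hε p hp i i' v
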